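/- A rule set R never-terminates (some KB with rule set R admits no finite chase tree) if there exists a cyclicity sequence for some KB with rule set R and some head-choice. -/

import Mathlib

set_option maxHeartbeats 1000000

namespace DisjChase

open scoped Classical
noncomputable section

/-! ### Basic syntax -/

abbrev Var := ℕ
abbrev Pred := ℕ

/-- An atom over a type of terms `T`. -/
structure Atom (T : Type) where
  pred : Pred
  args : List T
deriving DecidableEq

def Atom.map {S T : Type} (f : S → T) (a : Atom S) : Atom T :=
  ⟨a.pred, a.args.map f⟩

/-- A (disjunctive existential) rule: a nonempty body and a nonempty list of
nonempty head conjunctions, all constant- and function-free (atoms over variables). -/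
structure Rule where
  body : List (Atom Var)
  heads : List (List (Atom Var))
  body_ne : body ≠ []
  heads_ne : heads ≠ []
  heads_conj_ne : ∀ h ∈ heads, h ≠ []

def Rule.branching (ρ : Rule) : ℕ := ρ.heads.length

def Rule.bodyVars (ρ : Rule) : List Var := (ρ.body.map Atom.args).flatten

/-- The frontier of a rule: the body variables that also occur in some head disjunct. -/
def Rule.frontierList (ρ : Rule) : List Var :=
  (ρ.bodyVars.filter fun x => ρ.heads.any fun h => h.any fun a => a.args.contains x).dedup

/-- A rule is datalog if it is deterministic and has no existentially quantified variables. -/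
def Rule.Datalog (ρ : Rule) : Prop :=
  ρ.branching = 1 ∧ ∀ h ∈ ρ.heads, ∀ a ∈ h, ∀ x ∈ a.args, x ∈ ρ.bodyVars

/-- A rule is deterministic if it has exactly one head disjunct. -/
def Rule.Deterministic (ρ : Rule) : Prop := ρ.branching = 1

/-- Constants: the special constant `⋆`, ordinary constants, the fresh constants
`c_f` (one for each skolem function symbol `f = f^ρ_{i,y}`), and the fresh constants
`c_x` (one for each variable `x`, used by `σ_uc`). -/
inductive Const where
  | star : Const
  | nat : ℕ → Const
  | skolemConst : Rule → ℕ → Var → Const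
  | varConst : Var → Const

/-- Ground terms: built from constants and the skolem function symbols `f^ρ_{i,y}`. -/
inductive GTerm where
  | const : Const → GTerm
  | func : Rule → ℕ → Var → List GTerm → GTerm

def GTerm.isFunctional : GTerm → Prop
  | .const _ => False
  | .func _ _ _ _ => True

/-- `GTerm.Subterm s t` : `s` is a subterm of `t`. -/
inductive GTerm.Subterm : GTerm → GTerm → Prop
  | refl (t : GTerm) : GTerm.Subterm t t
  | func {u s : GTerm} {args : List GTerm} (ρ : Rule) (i : ℕ) (y : Var) :
      s ∈ args → GTerm.Subterm u s → GTerm.Subterm u (GTerm.func ρ i y args)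

def GTerm.depth : GTerm → ℕ
  | .const _ => 1
  | .func _ _ _ args => 1 + (args.attach.map fun t => GTerm.depth t.1).foldr max 0
termination_by t => sizeOf t
decreasing_by
  have := List.sizeOf_lt_of_mem t.2
  simp only [GTerm.func.sizeOf_spec]
  omega

/-- A term is cyclic if it has a subterm of the form `f(s⃗)` with `f` occurring in `s⃗`. -/
def GTerm.Cyclic (t : GTerm) : Prop :=
  ∃ (ρ : Rule) (i : ℕ) (y : Var) (args : List GTerm),
    GTerm.Subterm (GTerm.func ρ i y args) t ∧
    ∃ s ∈ args, ∃ args' : List GTerm, GTerm.Subterm (GTerm.func ρ i y args') s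

/-- A `ρ`-cyclic term: a term `f(s⃗)` with `f` a function symbol of `sk(ρ)`
occurring also in `s⃗`. -/
def RuleCyclic (ρ : Rule) (t : GTerm) : Prop :=
  ∃ (i : ℕ) (y : Var) (args : List GTerm), t = GTerm.func ρ i y args ∧
    ∃ s ∈ args, ∃ args' : List GTerm, GTerm.Subterm (GTerm.func ρ i y args') s

/-! ### Substitutions, facts, triggers -/

abbrev Subst := Var → GTerm
abbrev Fact := Atom GTerm
abbrev FactSet := Set Fact

/-- The substitution mapping every variable `x` to the fresh constant `c_x`. -/
def sigmaUC : Subst := fun x => GTerm.const (Const.varConst x)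

structure Trigger where
  rule : Rule
  subst : Subst

/-- The skolemizing substitution for disjunct `i`: body variables are mapped by `σ`,
existential variables `y` to the skolem term `f^ρ_{i,y}` applied to the frontier images. -/
def skolemSubst (ρ : Rule) (i : ℕ) (σ : Subst) : Subst := fun y =>
  if y ∈ ρ.bodyVars then σ y
  else GTerm.func ρ i y (ρ.frontierList.map σ)

/-- `out_i(λ) = η_i(sk(ρ))σ` (0-indexed disjuncts). -/
def Trigger.out (lam : Trigger) (i : ℕ) : FactSet :=
  { f | ∃ a ∈ lam.rule.heads.getD i [], f = a.map (skolemSubst lam.rule i lam.subst) }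

def Trigger.outUnion (lam : Trigger) : FactSet :=
  { f | ∃ i < lam.rule.branching, f ∈ lam.out i }

def Trigger.Loaded (lam : Trigger) (F : FactSet) : Prop :=
  ∀ a ∈ lam.rule.body, a.map lam.subst ∈ F

def Trigger.Obsolete (lam : Trigger) (F : FactSet) : Prop :=
  ∃ h ∈ lam.rule.heads, ∃ σ' : Subst,
    (∀ x ∈ lam.rule.bodyVars, σ' x = lam.subst x) ∧ ∀ a ∈ h, a.map σ' ∈ F

/-- A fact set satisfies a rule if all triggers with this rule are not loaded or obsolete. -/
def SatisfiesRule (F : FactSet) (ρ : Rule) : Prop :=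
  ∀ σ : Subst, Trigger.Loaded ⟨ρ, σ⟩ F → Trigger.Obsolete ⟨ρ, σ⟩ F

/-- A ground term is over a rule set if all its function symbols come from
the skolemization of the rule set. -/
inductive GTerm.Over (R : Set Rule) : GTerm → Prop
  | const (c : Const) : GTerm.Over R (GTerm.const c)
  | func {ρ : Rule} {i : ℕ} {y : Var} {args : List GTerm} :
      ρ ∈ R → (∀ t ∈ args, GTerm.Over R t) → GTerm.Over R (GTerm.func ρ i y args)

def RTrigger (R : Set Rule) (lam : Trigger) : Prop :=
  lam.rule ∈ R ∧ ∀ x : Var, (lam.subst x).Over R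

/-- A function-free fact set (i.e., a database). -/
def FunctionFree (F : FactSet) : Prop :=
  ∀ a ∈ F, ∀ t ∈ a.args, ∃ c : Const, t = GTerm.const c

/-! ### Chase trees -/

/-- Iterated edge relation: paths of length `k`. -/
def EPow {V : Type} (E : V → V → Prop) : ℕ → V → V → Prop
  | 0 => Eq
  | n + 1 => fun a c => ∃ b, E a b ∧ EPow E n b c

/-- A chase tree for the knowledge base `⟨R, D⟩` (restricted chase with datalog priority). -/
structure ChaseTree (R : Set Rule) (D : FactSet) where
  V : Type
  E : V → V → Prop
  fl : V → FactSet
  tl : V → Trigger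
  root : V
  reach_root : ∀ v, Relation.ReflTransGen E root v
  no_in_root : ∀ v, ¬ E v root
  parent_unique : ∀ {u w v : V}, E u v → E w v → u = w
  root_label : fl root = D
  expand : ∀ v : V, (∃ c, E v c) →
    ∃ lam : Trigger, RTrigger R lam ∧ lam.Loaded (fl v) ∧ ¬ lam.Obsolete (fl v) ∧
      (¬ lam.rule.Datalog → ∀ ρ ∈ R, ρ.Datalog → SatisfiesRule (fl v) ρ) ∧
      ∃ f : Fin lam.rule.branching → V,
        Function.Injective f ∧ (∀ i, E v (f i)) ∧ (∀ c, E v c → ∃ i, c = f i) ∧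
        ∀ i : Fin lam.rule.branching, fl (f i) = fl v ∪ lam.out i.1 ∧ tl (f i) = lam
  leaf_sat : ∀ v : V, (∀ c, ¬ E v c) → ∀ ρ ∈ R, SatisfiesRule (fl v) ρ
  fairness : ∀ lam : Trigger, RTrigger R lam → ∀ v : V, lam.Loaded (fl v) →
    ∃ k : ℕ, ∀ u : V, EPow E k v u → lam.Obsolete (fl u)

/-- A branch of a chase tree: a maximal path starting at the root. -/
structure Branch {R : Set Rule} {D : FactSet} (T : ChaseTree R D) where
  seq : ℕ → Option T.V
  head : seq 0 = some T.root
  step_some : ∀ n v w, seq n = some v → seq (n + 1) = some w → T.E v w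
  step_max : ∀ n v, seq n = some v → (∃ c, T.E v c) → ∃ w, seq (n + 1) = some w
  step_leaf : ∀ n v, seq n = some v → (∀ c, ¬ T.E v c) → seq (n + 1) = none
  step_none : ∀ n, seq n = none → seq (n + 1) = none

/-- The result of a chase tree: the unions of the fact labels along its branches. -/
def ChaseTree.result {R : Set Rule} {D : FactSet} (T : ChaseTree R D) : Set FactSet :=
  { S | ∃ b : Branch T, S = { f | ∃ n v, b.seq n = some v ∧ f ∈ T.fl v } }

/-- A rule set never-terminates if some knowledge base with this rule set
admits no finite chase tree. -/
def NeverTerminates (R : Set Rule) : Prop :=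
  ∃ D : FactSet, FunctionFree D ∧ ¬ ∃ T : ChaseTree R D, Finite T.V

/-! ### Head-choices and cyclicity sequences -/

/-- A head-choice maps every rule of `R` to one of its (1-indexed) disjuncts. -/
def IsHeadChoice (R : Set Rule) (hc : Rule → ℕ) : Prop :=
  ∀ ρ ∈ R, 1 ≤ hc ρ ∧ hc ρ ≤ ρ.branching

def outHC (hc : Rule → ℕ) (lam : Trigger) : FactSet := lam.out (hc lam.rule - 1)

/-- `b` is the branch `branch(T,hc)` of `T`: every successive label is the parent's
label united with `out_hc` of the applied trigger. -/
def IsHcBranch {R : Set Rule} {D : FactSet} (T : ChaseTree R D) (hc : Rule → ℕ)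
    (b : Branch T) : Prop :=
  ∀ n v w, b.seq n = some v → b.seq (n + 1) = some w →
    T.fl w = T.fl v ∪ outHC hc (T.tl w)

/-- `λ` is g-unblockable for `⟨R,D⟩` and `hc`. -/
def GUnblockable (R : Set Rule) (D : FactSet) (hc : Rule → ℕ) (lam : Trigger) : Prop :=
  ∀ T : ChaseTree R D, ∀ b : Branch T, IsHcBranch T hc b →
    ∀ n v, b.seq n = some v → lam.Loaded (T.fl v) →
      ∃ m u, b.seq m = some u ∧ outHC hc lam ⊆ T.fl u

/-- `F_i(K, hc, Λ)` for a sequence `Λ` of triggers (0-indexed: `Λ k` is applied to `F_k`). -/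
def chaseSeq (D : FactSet) (hc : Rule → ℕ) (Λ : ℕ → Trigger) : ℕ → FactSet
  | 0 => D
  | n + 1 => chaseSeq D hc Λ n ∪ outHC hc (Λ n)

def SeqLoaded (D : FactSet) (hc : Rule → ℕ) (Λ : ℕ → Trigger) : Prop :=
  ∀ n, (Λ n).Loaded (chaseSeq D hc Λ n)

/-- `t` occurs in the fact set `F`. -/
def GTerm.OccursIn (t : GTerm) (F : FactSet) : Prop :=
  ∃ a ∈ F, ∃ s ∈ a.args, t.Subterm s

def SeqGrowing (D : FactSet) (hc : Rule → ℕ) (Λ : ℕ → Trigger) : Prop :=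
  ∀ i, ∃ j, i < j ∧ ∃ t : GTerm,
    t.OccursIn (chaseSeq D hc Λ j) ∧ ¬ t.OccursIn (chaseSeq D hc Λ i)

/-- A cyclicity sequence: an (infinite) sequence of `R`-triggers that is loaded,
growing, and g-unblockable. -/
def CyclicitySequence (R : Set Rule) (D : FactSet) (hc : Rule → ℕ) (Λ : ℕ → Trigger) : Prop :=
  (∀ n, RTrigger R (Λ n)) ∧ SeqLoaded D hc Λ ∧ SeqGrowing D hc Λ ∧
    ∀ n, GUnblockable R D hc (Λ n)

/-! ### Over-approximations and unblockability -/

/-- `F` is an over-approximation of `R` and `hc` before `λ`. -/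
def IsOverApprox (R : Set Rule) (hc : Rule → ℕ) (lam : Trigger) (F : FactSet) : Prop :=
  ∃ h : GTerm → GTerm,
    (∀ x ∈ lam.rule.frontierList, h (lam.subst x) = lam.subst x) ∧
    ∀ D : FactSet, FunctionFree D → ∀ T : ChaseTree R D, ∀ b : Branch T,
      IsHcBranch T hc b → ∀ n u, b.seq n = some u → ¬ outHC hc lam ⊆ T.fl u →
        (Atom.map h) '' (T.fl u) ⊆ F

/-- The substitution mapping the frontier of `ρ` (in order) to the given argument list. -/
def frontierSubst (ρ : Rule) (args : List GTerm) : Subst := fun x =>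
  args.getD (ρ.frontierList.idxOf x) (GTerm.const Const.star)

/-- Birth facts of a term. -/
def GTerm.births : GTerm → FactSet
  | .const _ => ∅
  | .func ρ i _ args =>
      Trigger.out ⟨ρ, frontierSubst ρ args⟩ i ∪
        (args.attach.map fun s => GTerm.births s.1).foldr (· ∪ ·) ∅
termination_by t => sizeOf t
decreasing_by
  have := List.sizeOf_lt_of_mem s.2
  simp only [GTerm.func.sizeOf_spec]
  omega

/-- Birth facts of a trigger. -/
def Trigger.births (lam : Trigger) : FactSet :=
  { f | ∃ x ∈ lam.rule.frontierList, f ∈ GTerm.births (lam.subst x) }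

/-- The term-skeleton of a trigger: the terms occurring in its birth facts together
with the constants in frontier positions. -/
def skel (lam : Trigger) : Set GTerm :=
  { t | ∃ a ∈ lam.births, ∃ s ∈ a.args, t.Subterm s } ∪
  { t | ∃ x ∈ lam.rule.frontierList, lam.subst x = t ∧ ∃ c, t = GTerm.const c }

/-- `h^⋆_λ`. -/
def hstar (lam : Trigger) : GTerm → GTerm := fun t =>
  if t ∈ skel lam then t else GTerm.const Const.star

/-- `h^uc_λ`. -/
def huc (lam : Trigger) : GTerm → GTerm := fun t =>
  if t ∈ skel lam then t
  else
    match t with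
    | GTerm.func ρ i y _ => GTerm.const (Const.skolemConst ρ i y)
    | GTerm.const (Const.skolemConst ρ i y) => GTerm.const (Const.skolemConst ρ i y)
    | _ => GTerm.const Const.star

def hImg (h : GTerm → GTerm) (F : FactSet) : FactSet := (Atom.map h) '' F

def predsOf (R : Set Rule) : Set Pred :=
  { p | ∃ ρ ∈ R, (∃ a ∈ ρ.body, a.pred = p) ∨ ∃ h ∈ ρ.heads, ∃ a ∈ h, a.pred = p }

def skelConsts (lam : Trigger) : Set Const :=
  { c | ∃ t ∈ skel lam, GTerm.Subterm (GTerm.const c) t }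

/-- All facts over a predicate of `R` and constants from `skel(λ) ∪ {⋆}`. -/
def baseFacts (R : Set Rule) (lam : Trigger) : FactSet :=
  { a | a.pred ∈ predsOf R ∧
    ∀ t ∈ a.args, ∃ c : Const, t = GTerm.const c ∧ (c ∈ skelConsts lam ∨ c = Const.star) }

def Oclosed (R : Set Rule) (hc : Rule → ℕ) (lam : Trigger) (h : GTerm → GTerm)
    (F : FactSet) : Prop :=
  baseFacts R lam ⊆ F ∧ lam.births ⊆ F ∧
  ∀ lam' : Trigger, RTrigger R lam' → lam'.Loaded F → outHC hc lam' ≠ outHC hc lam →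
    hImg h (outHC hc lam') ⊆ F

/-- `O(R, hc, λ, h)`. -/
def Oset (R : Set Rule) (hc : Rule → ℕ) (lam : Trigger) (h : GTerm → GTerm) : FactSet :=
  ⋂₀ { F | Oclosed R hc lam h F }

def OclosedND (R : Set Rule) (lam : Trigger) (h : GTerm → GTerm) (F : FactSet) : Prop :=
  baseFacts R lam ⊆ F ∧ lam.births ⊆ F ∧
  ∀ lam' : Trigger, RTrigger R lam' → lam'.Loaded F →
    (lam'.rule = lam.rule → ∃ i < lam.rule.branching, lam'.out i ≠ lam.out i) →
    hImg h lam'.outUnion ⊆ F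

/-- `O(R, λ, h)`. -/
def OsetND (R : Set Rule) (lam : Trigger) (h : GTerm → GTerm) : FactSet :=
  ⋂₀ { F | OclosedND R lam h F }

/-- `λ` is `⋆`-unblockable for `R`. -/
def StarUnblockable (R : Set Rule) (lam : Trigger) : Prop :=
  lam.rule.Datalog ∨ ¬ lam.Obsolete (OsetND R lam (hstar lam))

/-- `λ` is `uc`-unblockable for `R` and `hc`. -/
def UcUnblockable (R : Set Rule) (hc : Rule → ℕ) (lam : Trigger) : Prop :=
  lam.rule.Datalog ∨ ¬ lam.Obsolete (Oset R hc lam (huc lam))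

/-! ### Constant mappings and reversibility -/

abbrev CMap := Const → Option GTerm

/-- Apply a constant mapping to a ground term, replacing constants in its domain. -/
def applyCM (g : CMap) : GTerm → GTerm
  | .const c => (g c).getD (GTerm.const c)
  | .func ρ i y args => GTerm.func ρ i y (args.attach.map fun s => applyCM g s.1)
termination_by t => sizeOf t
decreasing_by
  have := List.sizeOf_lt_of_mem s.2
  simp only [GTerm.func.sizeOf_spec]
  omega

/-- `g` is reversible for the (subterm-closed) set of terms `𝒯`. -/
def Reversible (g : CMap) (𝒯 : Set GTerm) : Prop :=
  (∀ c : Const, GTerm.const c ∈ 𝒯 → (g c).isSome) ∧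
  (∀ t ∈ 𝒯, ∀ s ∈ 𝒯, t ≠ s → applyCM g t ≠ applyCM g s) ∧
  (∀ c : Const, GTerm.const c ∈ 𝒯 →
    ∀ s : GTerm, s.Subterm (applyCM g (GTerm.const c)) →
      ∀ u ∈ 𝒯, u.isFunctional → applyCM g u ≠ s)

def cmImg (g : CMap) (F : FactSet) : FactSet := (Atom.map (applyCM g)) '' F

/-! ### Cyclicity prefixes -/

/-- The rule-database `D_ρ = body(ρ)σ_uc`. -/
def ruleDB (ρ : Rule) : FactSet := { f | ∃ a ∈ ρ.body, f = a.map sigmaUC }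

/-- A cyclicity prefix for `R`, `hc`, and `ρ ∈ R`. -/
structure CyclicityPrefix (R : Set Rule) (hc : Rule → ℕ) (ρ : Rule) where
  n : ℕ
  npos : 0 < n
  trig : ℕ → Trigger
  g : CMap
  rtrig : ∀ i ≤ n, RTrigger R (trig i)
  first_rule : (trig 0).rule = ρ
  first_subst : (trig 0).subst = sigmaUC
  loaded : ∀ i ≤ n, (trig i).Loaded (chaseSeq (ruleDB ρ) hc trig i)
  uc_unbl : ∀ i, 1 ≤ i → i ≤ n → UcUnblockable R hc (trig i)
  g_unbl : GUnblockable R (ruleDB ρ) hc (trig 0)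
  last_rule : (trig n).rule = ρ
  last_cyclic : ∃ t : GTerm, RuleCyclic ρ t ∧ t.OccursIn (outHC hc (trig n))
  g_comp : applyCM g ∘ (trig 0).subst = (trig n).subst
  g_rev : ∀ i, 1 ≤ i → i ≤ n → ∀ j : ℕ,
    Reversible g (skel ⟨(trig i).rule, (applyCM g)^[j] ∘ (trig i).subst⟩)

/-- The infinite sequence `Λ^∞` obtained by unfolding a cyclicity prefix. -/
def prefixInf {R : Set Rule} {hc : Rule → ℕ} {ρ : Rule} (P : CyclicityPrefix R hc ρ) :
    ℕ → Trigger := fun k =>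
  if k = 0 then P.trig 0
  else ⟨(P.trig ((k - 1) % P.n + 1)).rule,
        (applyCM P.g)^[(k - 1) / P.n] ∘ (P.trig ((k - 1) % P.n + 1)).subst⟩

/-! ### RPC, RPC_s, DRPC -/

def RPCclosed (R : Set Rule) (hc : Rule → ℕ) (ρ : Rule) (F : FactSet) : Prop :=
  ruleDB ρ ⊆ F ∧ outHC hc ⟨ρ, sigmaUC⟩ ⊆ F ∧
  ∀ lam : Trigger, RTrigger R lam →
    (∀ x ∈ lam.rule.bodyVars, ¬ (lam.subst x).Cyclic) →
    lam.Loaded F → UcUnblockable R hc lam →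
    (lam.rule = ρ → Set.InjOn lam.subst { x | x ∈ lam.rule.bodyVars }) →
    outHC hc lam ⊆ F

/-- `RPC(R, hc, ρ)`. -/
def RPCset (R : Set Rule) (hc : Rule → ℕ) (ρ : Rule) : FactSet :=
  ⋂₀ { F | RPCclosed R hc ρ F }

/-- `R` is restricted prefix-cyclic. -/
def IsRPC (R : Set Rule) : Prop :=
  ∃ hc : Rule → ℕ, IsHeadChoice R hc ∧
    ∃ ρ ∈ R, ∃ t : GTerm, RuleCyclic ρ t ∧ t.OccursIn (RPCset R hc ρ)

/-- The head-choice `hc_i`. -/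
def hcIdx (i : ℕ) : Rule → ℕ := fun ρ => if i ≤ ρ.branching then i else ρ.branching

/-- `branching(R)`: the least bound on the branching of the rules of `R`. -/
def branchingR (R : Set Rule) : ℕ := sInf { b | ∀ ρ ∈ R, ρ.branching ≤ b }

/-- `R` is `RPC_s`. -/
def IsRPCs (R : Set Rule) : Prop :=
  ∃ i : ℕ, 1 ≤ i ∧ i ≤ branchingR R ∧
    ∃ ρ ∈ R, ∃ t : GTerm, RuleCyclic ρ t ∧ t.OccursIn (RPCset R (hcIdx i) ρ)

def DRPCclosed (R : Set Rule) (ρ : Rule) (F : FactSet) : Prop :=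
  ruleDB ρ ⊆ F ∧ Trigger.out ⟨ρ, sigmaUC⟩ 0 ⊆ F ∧
  ∀ lam : Trigger, RTrigger R lam → lam.rule.Deterministic →
    (∀ x ∈ lam.rule.bodyVars, ¬ (lam.subst x).Cyclic) →
    lam.Loaded F → StarUnblockable R lam →
    (lam.rule = ρ → Set.InjOn lam.subst { x | x ∈ lam.rule.bodyVars }) →
    lam.out 0 ⊆ F

/-- `DRPC(R, ρ)`. -/
def DRPCset (R : Set Rule) (ρ : Rule) : FactSet :=
  ⋂₀ { F | DRPCclosed R ρ F }

/-- `R` is deterministic restricted prefix-cyclic. -/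
def IsDRPC (R : Set Rule) : Prop :=
  ∃ ρ ∈ R, ρ.Deterministic ∧ ∃ t : GTerm, RuleCyclic ρ t ∧ t.OccursIn (DRPCset R ρ)


/-! ### Auxiliary lemmas for Theorem 1 -/

section Aux

lemma epow_succ_iff {V : Type} (E : V → V → Prop) :
    ∀ (n : ℕ) (a c : V), EPow E (n + 1) a c ↔ ∃ b, EPow E n a b ∧ E b c := by
  intro n
  induction n with
  | zero =>
    intro a c
    constructor
    · rintro ⟨b, hab, hbc⟩; exact ⟨a, rfl, hbc ▸ hab⟩
    · rintro ⟨b, hab, hbc⟩; exact ⟨c, (show a = b from hab) ▸ hbc, rfl⟩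
  | succ n ih =>
    intro a c
    constructor
    · rintro ⟨b, hab, hbc⟩
      obtain ⟨d, hbd, hdc⟩ := (ih b c).mp hbc
      exact ⟨d, ⟨b, hab, hbd⟩, hdc⟩
    · rintro ⟨b, ⟨d, had, hdb⟩, hbc⟩
      exact ⟨d, had, (ih d c).mpr ⟨b, hdb, hbc⟩⟩

variable {R : Set Rule} {D : FactSet} (T : ChaseTree R D)

lemma path_len_unique :
    ∀ (n m : ℕ) (v : T.V), EPow T.E n T.root v → EPow T.E m T.root v → n = m := by
  intro n
  induction n with
  | zero =>
    intro m v hn hm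
    cases m with
    | zero => rfl
    | succ m =>
      exfalso
      obtain ⟨b, _, hb⟩ := (epow_succ_iff T.E m T.root v).mp hm
      exact T.no_in_root b ((show T.root = v from hn) ▸ hb)
  | succ n ih =>
    intro m v hn hm
    obtain ⟨u, hu, huv⟩ := (epow_succ_iff T.E n T.root v).mp hn
    cases m with
    | zero =>
      exfalso
      exact T.no_in_root u ((show T.root = v from hm) ▸ huv)
    | succ m =>
      obtain ⟨w, hw, hwv⟩ := (epow_succ_iff T.E m T.root v).mp hm
      have : u = w := T.parent_unique huv hwv
      rw [ih m u hu (this ▸ hw)]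

lemma branch_epow (b : Branch T) :
    ∀ (n : ℕ) (v : T.V), b.seq n = some v → EPow T.E n T.root v := by
  intro n
  induction n with
  | zero =>
    intro v hv
    have := b.head
    rw [hv] at this
    exact (Option.some_inj.mp this).symm
  | succ n ih =>
    intro v hv
    have hsome : ∃ u, b.seq n = some u := by
      by_contra h
      push_neg at h
      have : b.seq n = none := by
        cases hn : b.seq n with
        | none => rfl
        | some u => exact absurd hn (h u)
      rw [b.step_none n this] at hv
      exact nomatch hv
    obtain ⟨u, hu⟩ := hsome
    exact (epow_succ_iff T.E n T.root v).mpr ⟨u, ih u hu, b.step_some n u v hu hv⟩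

lemma branch_idx_unique (b : Branch T) {n m : ℕ} {v : T.V}
    (hn : b.seq n = some v) (hm : b.seq m = some v) : n = m :=
  path_len_unique T n m v (branch_epow T b n v hn) (branch_epow T b m v hm)

lemma branch_none_mono (b : Branch T) {n : ℕ} (h : b.seq n = none) :
    ∀ k, b.seq (n + k) = none := by
  intro k
  induction k with
  | zero => exact h
  | succ k ih => exact b.step_none _ ih

/-- Along an hc-branch, fact labels are monotone. -/
lemma hcBranch_mono (hc : Rule → ℕ) (b : Branch T) (hb : IsHcBranch T hc b) :
    ∀ (k n : ℕ) (v w : T.V), b.seq n = some v → b.seq (n + k) = some w →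
      T.fl v ⊆ T.fl w := by
  intro k
  induction k with
  | zero =>
    intro n v w hv hw
    have hw' : b.seq n = some w := hw
    rw [hv] at hw'
    cases Option.some_inj.mp hw'
    exact subset_rfl
  | succ k ih =>
    intro n v w hv hw'
    have hw : b.seq ((n + k) + 1) = some w := hw'
    have hsome : ∃ u, b.seq (n + k) = some u := by
      by_contra h
      push_neg at h
      have : b.seq (n + k) = none := by
        cases hn : b.seq (n + k) with
        | none => rfl
        | some u => exact absurd hn (h u)
      rw [b.step_none _ this] at hw
      exact nomatch hw
    obtain ⟨u, hu⟩ := hsome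
    have h1 : T.fl v ⊆ T.fl u := ih n v u hv hu
    have h2 : T.fl w = T.fl u ∪ outHC hc (T.tl w) := hb (n + k) u w hu hw
    rw [h2]
    exact h1.trans Set.subset_union_left

/-- Existence of an hc-child for a non-leaf vertex. -/
lemma exists_hc_child (hc : Rule → ℕ) (hhc : IsHeadChoice R hc) (v : T.V)
    (h : ∃ c, T.E v c) :
    ∃ w, T.E v w ∧ T.fl w = T.fl v ∪ outHC hc (T.tl w) := by
  obtain ⟨lam, hrt, _, _, _, f, _, hE, _, hprop⟩ := T.expand v h
  obtain ⟨h1, h2⟩ := hhc lam.rule hrt.1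
  have hi : hc lam.rule - 1 < lam.rule.branching := by omega
  refine ⟨f ⟨hc lam.rule - 1, hi⟩, hE _, ?_⟩
  obtain ⟨hfl, htl⟩ := hprop ⟨hc lam.rule - 1, hi⟩
  rw [hfl, htl]
  rfl

/-- The hc-branch sequence. -/
noncomputable def hcSeq (hc : Rule → ℕ) (hhc : IsHeadChoice R hc) : ℕ → Option T.V
  | 0 => some T.root
  | n + 1 =>
    match hcSeq hc hhc n with
    | none => none
    | some v =>
      if h : ∃ c, T.E v c then some (exists_hc_child T hc hhc v h).choose else none

lemma hcSeq_succ (hc : Rule → ℕ) (hhc : IsHeadChoice R hc) (n : ℕ) (v : T.V)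
    (h : hcSeq T hc hhc n = some v) :
    hcSeq T hc hhc (n + 1) =
      if h' : ∃ c, T.E v c then some (exists_hc_child T hc hhc v h').choose
      else none := by
  simp only [hcSeq, h]

lemma hcSeq_succ_some (hc : Rule → ℕ) (hhc : IsHeadChoice R hc) (n : ℕ) (v w : T.V)
    (h : hcSeq T hc hhc n = some v) (hw : hcSeq T hc hhc (n + 1) = some w) :
    T.E v w ∧ T.fl w = T.fl v ∪ outHC hc (T.tl w) := by
  rw [hcSeq_succ T hc hhc n v h] at hw
  split at hw
  · next h' =>
    obtain ⟨hE, hfl⟩ := (exists_hc_child T hc hhc v h').choose_spec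
    cases Option.some_inj.mp hw
    exact ⟨hE, hfl⟩
  · exact nomatch hw

/-- The hc-branch of a chase tree. -/
noncomputable def hcBranch (hc : Rule → ℕ) (hhc : IsHeadChoice R hc) : Branch T where
  seq := hcSeq T hc hhc
  head := rfl
  step_some := fun n v w hv hw => (hcSeq_succ_some T hc hhc n v w hv hw).1
  step_max := fun n v hv h => by
    rw [hcSeq_succ T hc hhc n v hv, dif_pos h]
    exact ⟨_, rfl⟩
  step_leaf := fun n v hv h => by
    rw [hcSeq_succ T hc hhc n v hv, dif_neg]
    rintro ⟨c, hc'⟩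
    exact h c hc'
  step_none := fun n h => by simp only [hcSeq, h]

lemma hcBranch_isHc (hc : Rule → ℕ) (hhc : IsHeadChoice R hc) :
    IsHcBranch T hc (hcBranch T hc hhc) :=
  fun n v w hv hw => (hcSeq_succ_some T hc hhc n v w hv hw).2

/-- Each `out` set of a trigger is finite. -/
lemma out_finite (lam : Trigger) (i : ℕ) : (lam.out i).Finite := by
  have : lam.out i =
      (fun a => a.map (skolemSubst lam.rule i lam.subst)) ''
        {a | a ∈ lam.rule.heads.getD i []} := by
    ext f
    simp [Trigger.out, Set.mem_image]
    tauto
  rw [this]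
  exact ((lam.rule.heads.getD i []).finite_toSet).image _

/-- Along an hc-branch, labels are `D` plus finitely many facts. -/
lemma branch_label_almost (hc : Rule → ℕ) (b : Branch T) (hb : IsHcBranch T hc b) :
    ∀ (n : ℕ) (v : T.V), b.seq n = some v →
      ∃ G : FactSet, G.Finite ∧ T.fl v ⊆ D ∪ G := by
  intro n
  induction n with
  | zero =>
    intro v hv
    have := b.head
    rw [hv] at this
    cases Option.some_inj.mp this
    refine ⟨∅, Set.finite_empty, ?_⟩
    rw [T.root_label]
    exact Set.subset_union_left
  | succ n ih =>
    intro v hv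
    have hsome : ∃ u, b.seq n = some u := by
      by_contra h
      push_neg at h
      have hnone : b.seq n = none := by
        cases hn : b.seq n with
        | none => rfl
        | some u => exact absurd hn (h u)
      rw [b.step_none n hnone] at hv
      exact nomatch hv
    obtain ⟨u, hu⟩ := hsome
    obtain ⟨G, hGfin, hG⟩ := ih u hu
    refine ⟨G ∪ outHC hc (T.tl v), hGfin.union (out_finite _ _), ?_⟩
    rw [hb n u v hu hv]
    intro f hf
    rcases hf with hf | hf
    · rcases hG hf with hf' | hf'
      · exact Or.inl hf'
      · exact Or.inr (Or.inl hf')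
    · exact Or.inr (Or.inr hf)

lemma subterm_const {t : GTerm} {c : Const} (h : GTerm.Subterm t (GTerm.const c)) :
    t = GTerm.const c := by
  cases h
  rfl

lemma subterm_func {t : GTerm} {ρ : Rule} {i : ℕ} {y : Var} {args : List GTerm}
    (h : GTerm.Subterm t (GTerm.func ρ i y args)) :
    t = GTerm.func ρ i y args ∨ ∃ s ∈ args, GTerm.Subterm t s := by
  cases h with
  | refl => exact Or.inl rfl
  | func _ _ _ hs hsub => exact Or.inr ⟨_, hs, hsub⟩

/-- The set of subterms of a term is finite. -/
lemma subterm_finite : ∀ (n : ℕ) (s : GTerm), sizeOf s ≤ n →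
    {t | GTerm.Subterm t s}.Finite := by
  intro n
  induction n with
  | zero =>
    intro s hs
    exfalso
    cases s <;> simp at hs
  | succ n ih =>
    intro s hs
    cases s with
    | const c =>
      refine Set.Finite.subset (Set.finite_singleton (GTerm.const c)) ?_
      intro t ht
      exact subterm_const ht
    | func ρ i y args =>
      have hsub : {t | GTerm.Subterm t (GTerm.func ρ i y args)} ⊆
          insert (GTerm.func ρ i y args)
            (⋃ s' ∈ {a | a ∈ args}, {t | GTerm.Subterm t s'}) := by
        intro t ht
        rcases subterm_func ht with h | ⟨s', hs', hsub'⟩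
        · exact Or.inl h
        · refine Or.inr ?_
          simp only [Set.mem_iUnion]
          exact ⟨s', hs', hsub'⟩
      refine Set.Finite.subset (Set.Finite.insert _ ?_) hsub
      refine Set.Finite.biUnion (List.finite_toSet args) ?_
      intro s' hs'
      refine ih s' ?_
      have := List.sizeOf_lt_of_mem hs'
      simp only [GTerm.func.sizeOf_spec] at hs
      omega

lemma occursIn_mono {t : GTerm} {F G : FactSet} (h : F ⊆ G) (ht : t.OccursIn F) :
    t.OccursIn G := by
  obtain ⟨a, ha, s, hs, hsub⟩ := ht
  exact ⟨a, h ha, s, hs, hsub⟩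

lemma loaded_mono {lam : Trigger} {F G : FactSet} (h : F ⊆ G)
    (hl : lam.Loaded F) : lam.Loaded G :=
  fun a ha => h (hl a ha)

lemma chaseSeq_mono (D : FactSet) (hc : Rule → ℕ) (Λ : ℕ → Trigger) :
    ∀ (k i : ℕ), chaseSeq D hc Λ i ⊆ chaseSeq D hc Λ (i + k) := by
  intro k
  induction k with
  | zero => intro i; exact subset_rfl
  | succ k ih =>
    intro i
    refine (ih i).trans ?_
    exact Set.subset_union_left

lemma chaseSeq_mono' (D : FactSet) (hc : Rule → ℕ) (Λ : ℕ → Trigger)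
    {i j : ℕ} (h : i ≤ j) : chaseSeq D hc Λ i ⊆ chaseSeq D hc Λ j := by
  have := chaseSeq_mono D hc Λ (j - i) i
  rwa [Nat.add_sub_cancel' h] at this

end Aux

/-- Theorem 1: a rule set never-terminates if there is a cyclicity sequence for
a knowledge base with this rule set and some head-choice. -/
theorem never_terminates_of_cyclicity_sequence (R : Set Rule) :
    (∃ (D : FactSet) (hc : Rule → ℕ) (Λ : ℕ → Trigger),
      FunctionFree D ∧ IsHeadChoice R hc ∧ CyclicitySequence R D hc Λ) →
    NeverTerminates R := by
  rintro ⟨D, hc, Λ, hD, hhc, hrt, hload, hgrow, hgub⟩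
  refine ⟨D, hD, ?_⟩
  rintro ⟨T, hfin⟩
  -- the hc-branch of T
  set b := hcBranch T hc hhc with hb_def
  have hb : IsHcBranch T hc b := hcBranch_isHc T hc hhc
  -- the branch must terminate: otherwise an injection ℕ → T.V
  have hterm : ∃ N, b.seq N = none := by
    by_contra h
    push_neg at h
    have hsome : ∀ n, ∃ v, b.seq n = some v := by
      intro n
      cases hn : b.seq n with
      | none => exact absurd hn (h n)
      | some v => exact ⟨v, rfl⟩
    set f : ℕ → T.V := fun n => (hsome n).choose with hf
    have hinj : Function.Injective f := by
      intro m n hmn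
      have h1 : b.seq m = some (f m) := (hsome m).choose_spec
      have h2 : b.seq n = some (f n) := (hsome n).choose_spec
      rw [← hmn] at h2
      exact branch_idx_unique T b h1 h2
    haveI := Finite.of_injective f hinj
    exact not_finite ℕ
  -- least index with none
  classical
  set N := Nat.find hterm with hN_def
  have hNnone : b.seq N = none := Nat.find_spec hterm
  have hNpos : 0 < N := by
    rcases Nat.eq_zero_or_pos N with h0 | h0
    · rw [h0] at hNnone
      rw [b.head] at hNnone
      exact nomatch hNnone
    · exact h0
  have hlast : ∃ v, b.seq (N - 1) = some v := by
    cases hn : b.seq (N - 1) with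
    | none => exact absurd hn (Nat.find_min hterm (by omega))
    | some v => exact ⟨v, rfl⟩
  obtain ⟨vlast, hvlast⟩ := hlast
  -- any vertex on the branch has index < N and label ⊆ fl vlast
  have hidx_lt : ∀ m u, b.seq m = some u → m ≤ N - 1 := by
    intro m u hu
    by_contra h
    push_neg at h
    have : b.seq m = none := by
      have := branch_none_mono T b hNnone (m - N)
      rwa [Nat.add_sub_cancel' (by omega : N ≤ m)] at this
    rw [this] at hu
    exact nomatch hu
  have hsub_last : ∀ m u, b.seq m = some u → T.fl u ⊆ T.fl vlast := by
    intro m u hu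
    have hm : m ≤ N - 1 := hidx_lt m u hu
    have := hcBranch_mono T hc b hb (N - 1 - m) m u vlast hu
      (by rwa [Nat.add_sub_cancel' hm])
    exact this
  -- all chase-sequence stages are contained in fl vlast
  have hstage : ∀ i, chaseSeq D hc Λ i ⊆ T.fl vlast := by
    intro i
    induction i with
    | zero =>
      have hroot : b.seq 0 = some T.root := b.head
      have := hsub_last 0 T.root hroot
      rw [T.root_label] at this
      exact this
    | succ i ih =>
      intro f hf
      rcases hf with hf | hf
      · exact ih hf
      · have hloaded : (Λ i).Loaded (T.fl vlast) :=
          loaded_mono ih (hload i)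
        obtain ⟨m, u, hu, hout⟩ :=
          hgub i T b hb (N - 1) vlast hvlast hloaded
        exact hsub_last m u hu (hout hf)
  -- the terms occurring in fl vlast but not in D form a finite set
  obtain ⟨G, hGfin, hGsub⟩ := branch_label_almost T hc b hb (N - 1) vlast hvlast
  set NewTerms : Set GTerm :=
    {t | t.OccursIn (T.fl vlast) ∧ ¬ t.OccursIn D} with hNT
  have hNTfin : NewTerms.Finite := by
    have hsub : NewTerms ⊆ ⋃ a ∈ G, ⋃ s ∈ {s | s ∈ a.args}, {t | GTerm.Subterm t s} := by
      rintro t ⟨⟨a, ha, s, hs, hsub⟩, hnD⟩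
      rcases hGsub ha with haD | haG
      · exact absurd ⟨a, haD, s, hs, hsub⟩ hnD
      · simp only [Set.mem_iUnion]
        exact ⟨a, haG, s, hs, hsub⟩
    refine Set.Finite.subset ?_ hsub
    refine Set.Finite.biUnion hGfin ?_
    intro a _
    refine Set.Finite.biUnion (List.finite_toSet a.args) ?_
    intro s _
    exact subterm_finite (sizeOf s) s le_rfl
  -- build an infinite family of distinct new terms from the growing property
  have hstep : ∀ i : ℕ, ∃ j, i < j ∧ ∃ t : GTerm,
      t.OccursIn (chaseSeq D hc Λ j) ∧ ¬ t.OccursIn (chaseSeq D hc Λ i) := hgrow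
  set p : ℕ → ℕ := fun k => Nat.rec 0 (fun _ i => (hstep i).choose) k with hp
  have hp_succ : ∀ k, p (k + 1) = (hstep (p k)).choose := fun k => rfl
  have hp_lt : ∀ k, p k < p (k + 1) := by
    intro k
    exact (hstep (p k)).choose_spec.1
  have hp_mono : StrictMono p := strictMono_nat_of_lt_succ hp_lt
  set tm : ℕ → GTerm := fun k => (hstep (p k)).choose_spec.2.choose with htm
  have htm_spec : ∀ k, (tm k).OccursIn (chaseSeq D hc Λ (p (k + 1))) ∧
      ¬ (tm k).OccursIn (chaseSeq D hc Λ (p k)) := by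
    intro k
    exact (hstep (p k)).choose_spec.2.choose_spec
  have htm_inj : Function.Injective tm := by
    intro k k' hkk'
    by_contra hne
    rcases Nat.lt_or_ge k k' with h | h
    · have h1 : (tm k).OccursIn (chaseSeq D hc Λ (p k')) :=
        occursIn_mono (chaseSeq_mono' D hc Λ (hp_mono.le_iff_le.mpr h)) (htm_spec k).1
      rw [hkk'] at h1
      exact (htm_spec k').2 h1
    · have h' : k' < k := by omega
      have h1 : (tm k').OccursIn (chaseSeq D hc Λ (p k)) :=
        occursIn_mono (chaseSeq_mono' D hc Λ (hp_mono.le_iff_le.mpr h')) (htm_spec k').1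
      rw [← hkk'] at h1
      exact (htm_spec k).2 h1
  have htm_mem : ∀ k, tm k ∈ NewTerms := by
    intro k
    refine ⟨occursIn_mono (hstage (p (k + 1))) (htm_spec k).1, ?_⟩
    intro hD'
    exact (htm_spec k).2 (occursIn_mono (chaseSeq_mono' D hc Λ (Nat.zero_le _)) hD')
  exact (Set.infinite_of_injective_forall_mem htm_inj htm_mem) hNTfin

end
end DisjChase
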